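/- arXiv:1011.5975 — 3 statements merged into one kernel-verified Lean document; each statement's English description precedes it below -/
import Mathlib

section
/- Let f be a homogeneous cubic polynomial on V whose multiplicative Legendre transform f_* is polynomial, satisfying f_*(f'(x)) = f(x)^2 identically. If f_* is a reducible polynomial, then f is reducible. -/
open MvPolynomial

namespace Stmt2Aux

variable {σ : Type*} {R : Type*}

lemma degree_add (u v : σ →₀ ℕ) : (u + v).degree = u.degree + v.degree := by
  simp [Finsupp.degree_eq_weight_one, map_add]

lemma exists_degree_eq_totalDegree [CommSemiring R] {p : MvPolynomial σ R} (hp : p ≠ 0) :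
    ∃ d ∈ p.support, d.degree = p.totalDegree := by
  obtain ⟨d, hd, hd'⟩ := Finset.exists_mem_eq_sup p.support (support_nonempty.mpr hp)
    (fun s => s.sum fun _ n => n)
  refine ⟨d, hd, ?_⟩
  rw [MvPolynomial.totalDegree, hd']
  rfl

lemma top_ne_zero [CommSemiring R] {p : MvPolynomial σ R} (hp : p ≠ 0) :
    homogeneousComponent p.totalDegree p ≠ 0 := by
  obtain ⟨d, hd, hdd⟩ := exists_degree_eq_totalDegree hp
  have h1 : coeff d (homogeneousComponent p.totalDegree p) = coeff d p := by
    rw [coeff_homogeneousComponent, if_pos hdd]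
  intro h
  rw [h, coeff_zero] at h1
  exact (mem_support_iff.mp hd) h1.symm

lemma top_mul [CommSemiring R] (p q : MvPolynomial σ R) :
    homogeneousComponent (p.totalDegree + q.totalDegree) (p * q)
      = homogeneousComponent p.totalDegree p * homogeneousComponent q.totalDegree q := by
  classical
  ext d
  rw [coeff_homogeneousComponent]
  by_cases hd : d.degree = p.totalDegree + q.totalDegree
  · rw [if_pos hd, coeff_mul, coeff_mul]
    apply Finset.sum_congr rfl
    rintro ⟨u, v⟩ huv
    have huvd : u + v = d := Finset.HasAntidiagonal.mem_antidiagonal.mp huv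
    have hsum : u.degree + v.degree = p.totalDegree + q.totalDegree := by
      rw [← hd, ← huvd, degree_add]
    rw [coeff_homogeneousComponent, coeff_homogeneousComponent]
    by_cases hu : u.degree = p.totalDegree
    · have hv : v.degree = q.totalDegree := by omega
      rw [if_pos hu, if_pos hv]
    · rw [if_neg hu]
      rcases lt_or_gt_of_ne hu with h | h
      · have hv : q.totalDegree < v.degree := by omega
        rw [coeff_eq_zero_of_totalDegree_lt hv, mul_zero]
        by_cases hv2 : v.degree = q.totalDegree
        · omega
        · rw [if_neg hv2, mul_zero]
      · rw [coeff_eq_zero_of_totalDegree_lt h, zero_mul]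
        split <;> simp [coeff_eq_zero_of_totalDegree_lt h]
  · rw [if_neg hd,
      ((homogeneousComponent_isHomogeneous _ p).mul
        (homogeneousComponent_isHomogeneous _ q)).coeff_eq_zero hd]

lemma totalDegree_mul_eq [CommRing R] [IsDomain R] {p q : MvPolynomial σ R}
    (hp : p ≠ 0) (hq : q ≠ 0) :
    (p * q).totalDegree = p.totalDegree + q.totalDegree := by
  refine le_antisymm (totalDegree_mul p q) ?_
  by_contra hlt
  push_neg at hlt
  have h0 := homogeneousComponent_eq_zero _ _ hlt
  rw [top_mul] at h0
  exact mul_ne_zero (top_ne_zero hp) (top_ne_zero hq) h0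

lemma eq_C_of_totalDegree_eq_zero [CommSemiring R] {p : MvPolynomial σ R}
    (h : p.totalDegree = 0) : p = C (coeff 0 p) := by
  classical
  ext d
  by_cases hd : d = 0
  · subst hd; simp
  · rw [coeff_C, if_neg (Ne.symm hd)]
    by_contra hc
    have hds := mem_support_iff.mpr hc
    have := (totalDegree_eq_zero_iff _ p).mp h d hds
    exact hd (Finsupp.ext fun x => this x)

lemma one_le_totalDegree_of_not_isUnit {K : Type*} [Field K] {p : MvPolynomial σ K}
    (hp : p ≠ 0) (h : ¬ IsUnit p) : 1 ≤ p.totalDegree := by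
  by_contra hlt
  push_neg at hlt
  have h0 : p.totalDegree = 0 := by omega
  have hpc := eq_C_of_totalDegree_eq_zero h0
  have hc : coeff 0 p ≠ 0 := fun hcc => hp (by rw [hpc, hcc, map_zero])
  exact h (by
    rw [hpc]
    exact isUnit_iff_exists_inv.mpr ⟨C (coeff 0 p)⁻¹, by
      rw [← C_mul, mul_inv_cancel₀ hc, C_1]⟩)

lemma totalDegree_eq_zero_of_isUnit {K : Type*} [Field K] {p : MvPolynomial σ K}
    (h : IsUnit p) : p.totalDegree = 0 := by
  obtain ⟨v, hv⟩ := isUnit_iff_exists_inv.mp h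
  have hp : p ≠ 0 := fun h0 => one_ne_zero (α := MvPolynomial σ K) (by rw [← hv, h0, zero_mul])
  have hvne : v ≠ 0 := fun h0 => one_ne_zero (α := MvPolynomial σ K) (by rw [← hv, h0, mul_zero])
  have := totalDegree_mul_eq hp hvne
  rw [hv, totalDegree_one] at this
  omega

lemma pderiv_isHomogeneous [CommSemiring R] {p : MvPolynomial σ R} {m : ℕ}
    (hp : p.IsHomogeneous m) (i : σ) : (pderiv i p).IsHomogeneous (m - 1) := by
  conv_lhs => rw [p.as_sum]
  rw [map_sum]
  apply IsHomogeneous.sum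
  intro d hd
  rw [pderiv_monomial]
  by_cases hdi : d i = 0
  · rw [hdi]
    simp only [Nat.cast_zero, mul_zero, map_zero]
    exact isHomogeneous_zero _ _ _
  · apply isHomogeneous_monomial
    have hdeg : d.degree = m := by
      have := hp (mem_support_iff.mp hd)
      rw [Finsupp.degree_eq_weight_one]
      exact this
    have hle : Finsupp.single i 1 ≤ d := Finsupp.single_le_iff.mpr (Nat.one_le_iff_ne_zero.mpr hdi)
    have hadd : (d - Finsupp.single i 1) + Finsupp.single i 1 = d := tsub_add_cancel_of_le hle
    have hds : (Finsupp.single i (1:ℕ)).degree = 1 := by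
      classical
      rw [Finsupp.degree_single]
    have := congrArg Finsupp.degree hadd
    rw [degree_add, hds, hdeg] at this
    omega

end Stmt2Aux

open Stmt2Aux in
/-- If `f`, `f_*` are nonzero homogeneous cubic polynomials (in
coordinates, on a space of dimension ≥ 2) satisfying `f_*(f'(x)) = f(x)^2`
identically, and `f_*` is reducible (a product of two nonconstant polynomials),
then `f` is reducible. -/
theorem stmt2 {n : ℕ} (hn : 2 ≤ n)
    (f fstar : MvPolynomial (Fin n) ℂ) (hf0 : f ≠ 0) (hfs0 : fstar ≠ 0)
    (hf : f.IsHomogeneous 3) (hfs : fstar.IsHomogeneous 3)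
    (hid : ∀ x : Fin n → ℂ,
      MvPolynomial.eval (fun i => MvPolynomial.eval x (MvPolynomial.pderiv i f)) fstar
        = (MvPolynomial.eval x f) ^ 2)
    (hred : ∃ g h : MvPolynomial (Fin n) ℂ,
      1 ≤ g.totalDegree ∧ 1 ≤ h.totalDegree ∧ fstar = g * h) :
    ∃ g h : MvPolynomial (Fin n) ℂ,
      1 ≤ g.totalDegree ∧ 1 ≤ h.totalDegree ∧ f = g * h := by
  classical
  obtain ⟨g0, h0, hg1, hh1, hfs_eq⟩ := hred
  have hg00 : g0 ≠ 0 := fun h => hfs0 (by rw [hfs_eq, h, zero_mul])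
  have hh00 : h0 ≠ 0 := fun h => hfs0 (by rw [hfs_eq, h, mul_zero])
  set a := g0.totalDegree with ha
  set b := h0.totalDegree with hb
  set g := homogeneousComponent a g0 with hgdef
  set h := homogeneousComponent b h0 with hhdef
  have hgne : g ≠ 0 := top_ne_zero hg00
  have hhne : h ≠ 0 := top_ne_zero hh00
  have htop : homogeneousComponent (a + b) fstar = g * h := by
    rw [hfs_eq]; exact top_mul g0 h0
  have hmem : fstar ∈ homogeneousSubmodule (Fin n) ℂ 3 := hfs
  rw [homogeneousComponent_of_mem hmem] at htop
  by_cases hab : a + b = 3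
  swap
  · rw [if_neg hab] at htop
    exact absurd htop.symm (mul_ne_zero hgne hhne)
  rw [if_pos hab] at htop
  -- htop : fstar = g * h, with g homog a, h homog b, a+b=3, a,b ≥ 1
  have hgh : g.IsHomogeneous a := homogeneousComponent_isHomogeneous a g0
  have hhh : h.IsHomogeneous b := homogeneousComponent_isHomogeneous b h0
  -- pick the linear and quadratic homogeneous factors
  obtain ⟨gl, hq, hgl, hhq, hfgh⟩ :
      ∃ gl hq : MvPolynomial (Fin n) ℂ,
        gl.IsHomogeneous 1 ∧ hq.IsHomogeneous 2 ∧ fstar = gl * hq := by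
    rcases (by omega : a = 1 ∧ b = 2 ∨ a = 2 ∧ b = 1) with ⟨ha1, hb2⟩ | ⟨ha2, hb1⟩
    · exact ⟨g, h, ha1 ▸ hgh, hb2 ▸ hhh, htop⟩
    · exact ⟨h, g, hb1 ▸ hhh, ha2 ▸ hgh, by rw [htop, mul_comm]⟩
  have hglne : gl ≠ 0 := fun h0' => hfs0 (by rw [hfgh, h0', zero_mul])
  have hhqne : hq ≠ 0 := fun h0' => hfs0 (by rw [hfgh, h0', mul_zero])
  -- the gradient substitution
  set D : Fin n → MvPolynomial (Fin n) ℂ := fun i => pderiv i f with hD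
  have hDh : ∀ i, (D i).IsHomogeneous 2 := fun i => pderiv_isHomogeneous hf i
  have hP : bind₁ D fstar = f ^ 2 := by
    apply MvPolynomial.funext
    intro x
    have : eval x (bind₁ D fstar) = eval (fun i => eval x (D i)) fstar := by
      rw [eval, eval₂Hom_bind₁]; rfl
    rw [this, map_pow]
    exact hid x
  set A := bind₁ D gl with hAdef
  set B := bind₁ D hq with hBdef
  have hABmul : A * B = f ^ 2 := by rw [hAdef, hBdef, ← map_mul, ← hfgh, hP]
  have hA2 : A.IsHomogeneous 2 := by
    have := hgl.aeval D hDh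
    rw [aeval_eq_bind₁] at this
    simpa using this
  have hB4 : B.IsHomogeneous 4 := by
    have := hhq.aeval D hDh
    rw [aeval_eq_bind₁] at this
    simpa using this
  have hf2ne : f ^ 2 ≠ 0 := pow_ne_zero _ hf0
  have hAne : A ≠ 0 := fun h0' => hf2ne (by rw [← hABmul, h0', zero_mul])
  have hBne : B ≠ 0 := fun h0' => hf2ne (by rw [← hABmul, h0', mul_zero])
  have hdegA : A.totalDegree = 2 := hA2.totalDegree hAne
  have hdegB : B.totalDegree = 4 := hB4.totalDegree hBne
  have hdegf : f.totalDegree = 3 := hf.totalDegree hf0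
  by_cases hirr : Irreducible f
  · have hprime : Prime f := UniqueFactorizationMonoid.irreducible_iff_prime.mp hirr
    have hdvd : f ∣ A * B := ⟨f, by rw [hABmul]; ring⟩
    rcases hprime.2.2 A B hdvd with hdA | hdB
    · obtain ⟨c, hc⟩ := hdA
      have hcne : c ≠ 0 := fun h0' => hAne (by rw [hc, h0', mul_zero])
      have := totalDegree_mul_eq hf0 hcne
      rw [← hc, hdegA, hdegf] at this
      omega
    · obtain ⟨c, hc⟩ := hdB
      have hcne : c ≠ 0 := fun h0' => hBne (by rw [hc, h0', mul_zero])
      have hdc : c.totalDegree = 1 := by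
        have := totalDegree_mul_eq hf0 hcne
        rw [← hc, hdegB, hdegf] at this
        omega
      have hfAc : f = A * c := by
        have h2 : f * f = f * (A * c) := by
          rw [← pow_two, ← hABmul, hc]; ring
        exact mul_left_cancel₀ hf0 h2
      exact ⟨A, c, by omega, by omega, hfAc⟩
  · have hfnu : ¬ IsUnit f := fun hu => by
      have := totalDegree_eq_zero_of_isUnit hu
      omega
    rw [irreducible_iff] at hirr
    push_neg at hirr
    obtain ⟨p, q, hpq, hpu, hqu⟩ := hirr hfnu
    have hpne : p ≠ 0 := fun h0' => hf0 (by rw [hpq, h0', zero_mul])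
    have hqne : q ≠ 0 := fun h0' => hf0 (by rw [hpq, h0', mul_zero])
    exact ⟨p, q, one_le_totalDegree_of_not_isUnit hpne hpu,
      one_le_totalDegree_of_not_isUnit hqne hqu, hpq⟩
end

section
/- Let f be a homogeneous cubic polynomial on V, I ∈ V with f(I) ≠ 0, and τ_{f,A} the second logarithmic differential of f at A (the derivative of x ↦ f'(x)/f(x)). Then the map A ↦ τ_{f,A}(I), defined on {f ≠ 0}, has directional derivative at I in direction B equal to −2·τ_{f,I}(B); i.e., τ_{f,I+tB}(I) = τ_{f,I}(I) − 2t·τ_{f,I}(B) + o(t). -/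
open Asymptotics Filter Topology

/-- The second logarithmic differential of the cubic with polarization `Q`:
`τ_{f,A}(z)(C) = 3 (2 f(A) Q z A C − 3 Q A A z · Q A A C) / f(A)²`,
where `f A = Q A A A`. -/
noncomputable def tauQ {V : Type*} [AddCommGroup V] [Module ℂ V]
    (Q : V →ₗ[ℂ] V →ₗ[ℂ] V →ₗ[ℂ] ℂ) (A z C : V) : ℂ :=
  3 * (2 * Q A A A * Q z A C - 3 * Q A A z * Q A A C) / (Q A A A) ^ 2

private lemma poly3_deriv (c0 c1 c2 c3 : ℂ) :
    HasDerivAt (fun t : ℂ => c0 + c1 * t + c2 * t ^ 2 + c3 * t ^ 3) c1 0 := by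
  have h := (((hasDerivAt_const (0:ℂ) c0).add
      ((hasDerivAt_id (0:ℂ)).const_mul c1)).add
      ((hasDerivAt_pow 2 (0:ℂ)).const_mul c2)).add
      ((hasDerivAt_pow 3 (0:ℂ)).const_mul c3)
  exact h.congr_deriv (by simp)

/-- For `I` with `f(I) ≠ 0`, the map `A ↦ τ_{f,A}(I)` satisfies
`τ_{f,I+tB}(I) = τ_{f,I}(I) − 2t τ_{f,I}(B) + o(t)`. -/
theorem stmt10 {V : Type*} [NormedAddCommGroup V] [NormedSpace ℂ V]
    [FiniteDimensional ℂ V]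
    (Q : V →ₗ[ℂ] V →ₗ[ℂ] V →ₗ[ℂ] ℂ)
    (hsymm1 : ∀ a b c : V, Q a b c = Q b a c)
    (hsymm2 : ∀ a b c : V, Q a b c = Q a c b)
    (I : V) (hI : Q I I I ≠ 0) :
    ∀ B C : V,
      (fun t : ℂ => tauQ Q (I + t • B) I C - (tauQ Q I I C - 2 * t * tauQ Q I B C))
        =o[𝓝 (0 : ℂ)] fun t => t := by
  intro B C
  -- symmetry consequences
  have eBII : Q B I I = Q I I B := by rw [hsymm1, hsymm2]
  have eIBI : Q I B I = Q I I B := by rw [hsymm2]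
  have eBBI : Q B B I = Q I B B := by rw [hsymm2 B B I, hsymm1 B I B]
  have eBIB : Q B I B = Q I B B := by rw [hsymm1]
  have eBIC : Q B I C = Q I B C := by rw [hsymm1]
  have eBBC : Q B B C = Q B B C := rfl
  -- the four coordinate functions
  have ha : HasDerivAt (fun t : ℂ => Q (I + t•B) (I + t•B) (I + t•B))
      (3 * Q I I B) 0 := by
    have heq : (fun t : ℂ => Q (I + t•B) (I + t•B) (I + t•B))
        = fun t => Q I I I + (3 * Q I I B) * t + (3 * Q I B B) * t ^ 2
            + Q B B B * t ^ 3 := by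
      funext t
      simp only [map_add, map_smul, LinearMap.add_apply, LinearMap.smul_apply,
        smul_eq_mul, eBII, eIBI, eBBI, eBIB]
      ring
    rw [heq]; exact poly3_deriv _ _ _ _
  have hb : HasDerivAt (fun t : ℂ => Q I (I + t•B) C) (Q I B C) 0 := by
    have heq : (fun t : ℂ => Q I (I + t•B) C)
        = fun t => Q I I C + Q I B C * t + 0 * t ^ 2 + 0 * t ^ 3 := by
      funext t
      simp only [map_add, map_smul, LinearMap.add_apply, LinearMap.smul_apply,
        smul_eq_mul]
      ring
    rw [heq]; exact poly3_deriv _ _ _ _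
  have hc : HasDerivAt (fun t : ℂ => Q (I + t•B) (I + t•B) I) (2 * Q I I B) 0 := by
    have heq : (fun t : ℂ => Q (I + t•B) (I + t•B) I)
        = fun t => Q I I I + (2 * Q I I B) * t + Q I B B * t ^ 2 + 0 * t ^ 3 := by
      funext t
      simp only [map_add, map_smul, LinearMap.add_apply, LinearMap.smul_apply,
        smul_eq_mul, eBII, eIBI, eBBI]
      ring
    rw [heq]; exact poly3_deriv _ _ _ _
  have hd : HasDerivAt (fun t : ℂ => Q (I + t•B) (I + t•B) C) (2 * Q I B C) 0 := by
    have heq : (fun t : ℂ => Q (I + t•B) (I + t•B) C)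
        = fun t => Q I I C + (2 * Q I B C) * t + Q B B C * t ^ 2 + 0 * t ^ 3 := by
      funext t
      simp only [map_add, map_smul, LinearMap.add_apply, LinearMap.smul_apply,
        smul_eq_mul, eBIC]
      ring
    rw [heq]; exact poly3_deriv _ _ _ _
  -- numerator and denominator
  have hnum : HasDerivAt
      (fun t : ℂ => 3 * (2 * Q (I + t•B) (I + t•B) (I + t•B) * Q I (I + t•B) C
        - 3 * Q (I + t•B) (I + t•B) I * Q (I + t•B) (I + t•B) C))
      (3 * ((2 * (3 * Q I I B) * Q I I C + 2 * Q I I I * Q I B C)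
        - (3 * (2 * Q I I B) * Q I I C + 3 * Q I I I * (2 * Q I B C)))) 0 := by
    have h := (((ha.const_mul 2).mul hb).sub ((hc.const_mul 3).mul hd)).const_mul 3
    simp only [zero_smul, add_zero] at h
    exact h
  have hden : HasDerivAt (fun t : ℂ => (Q (I + t•B) (I + t•B) (I + t•B)) ^ 2)
      (2 * Q I I I * (3 * Q I I B)) 0 := by
    have h := ha.pow 2
    simp only [zero_smul, add_zero] at h
    exact h.congr_deriv (by norm_num)
  have hden0 : (Q (I + (0:ℂ)•B) (I + (0:ℂ)•B) (I + (0:ℂ)•B)) ^ 2 ≠ 0 := by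
    simp only [zero_smul, add_zero]
    exact pow_ne_zero 2 hI
  have key : HasDerivAt (fun t : ℂ => tauQ Q (I + t • B) I C)
      (-2 * tauQ Q I B C) 0 := by
    have h := hnum.div hden hden0
    simp only [zero_smul, add_zero] at h
    have : (fun t : ℂ => tauQ Q (I + t • B) I C)
        = fun t : ℂ => (3 * (2 * Q (I + t•B) (I + t•B) (I + t•B) * Q I (I + t•B) C
        - 3 * Q (I + t•B) (I + t•B) I * Q (I + t•B) (I + t•B) C))
        / (Q (I + t•B) (I + t•B) (I + t•B)) ^ 2 := by
      funext t; simp [tauQ, mul_div_assoc]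
    rw [this]
    refine h.congr_deriv ?_
    simp only [tauQ, eBIC]
    field_simp
    ring
  have h2 := (hasDerivAt_iff_isLittleO.mp key)
  simp only [zero_smul, add_zero, sub_zero, smul_eq_mul] at h2
  have : (fun t : ℂ => tauQ Q (I + t • B) I C - (tauQ Q I I C - 2 * t * tauQ Q I B C))
      = fun t : ℂ => tauQ Q (I + (0:ℂ) • B) I C - tauQ Q I I C
        + (tauQ Q (I + t • B) I C - tauQ Q (I + (0:ℂ) • B) I C - t * (-2 * tauQ Q I B C)) := by
    funext t; simp only [zero_smul, add_zero]; ring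
  rw [this]
  simpa using h2
end

section
/- Let f be a homogeneous cubic polynomial on V and I ∈ V with f(I) ≠ 0 such that τ_{f,I} is invertible. Define φ_I : {f ≠ 0} → V by φ_I(A) = τ_{f,I}^{-1}(τ_{f,A}(I)). Then the differential of φ_I at the point I equals −2·Id_V; in particular the image of φ_I contains a Zariski-dense open neighborhood of φ_I(I). -/
set_option maxHeartbeats 1000000
set_option synthInstance.maxHeartbeats 400000


/-- Let `f` be a homogeneous cubic, `I` with `f(I) ≠ 0`, and
suppose `τ_{f,I} = d_I(f'/f)` is invertible, with inverse `S`.  Define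
`φ_I(A) = S(τ_{f,A}(I))` on `{f ≠ 0}`.  Then `d_I φ_I = −2·Id`, and the image of
`φ_I` contains an open neighborhood of `φ_I(I)` which is Zariski dense (any
entire analytic function vanishing on it vanishes identically). -/
theorem stmt11 {V : Type*} [NormedAddCommGroup V] [NormedSpace ℂ V]
    [FiniteDimensional ℂ V]
    (f : V → ℂ) (hf : ContDiff ℂ ⊤ f)
    (hfhom : ∀ (c : ℂ) (x : V), f (c • x) = c ^ 3 * f x)
    (I : V) (hI : f I ≠ 0)
    (S : (V →L[ℂ] ℂ) →L[ℂ] V)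
    (hS1 : ∀ z : V, S (fderiv ℂ (fun x : V => (f x)⁻¹ • fderiv ℂ f x) I z) = z)
    (hS2 : ∀ ξ : V →L[ℂ] ℂ,
      fderiv ℂ (fun x : V => (f x)⁻¹ • fderiv ℂ f x) I (S ξ) = ξ) :
    fderiv ℂ (fun A : V => S (fderiv ℂ (fun x : V => (f x)⁻¹ • fderiv ℂ f x) A I)) I
        = (-2 : ℂ) • ContinuousLinearMap.id ℂ V ∧
    ∃ U : Set V, IsOpen U ∧
      (S (fderiv ℂ (fun x : V => (f x)⁻¹ • fderiv ℂ f x) I I)) ∈ U ∧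
      U ⊆ (fun A : V => S (fderiv ℂ (fun x : V => (f x)⁻¹ • fderiv ℂ f x) A I)) ''
            {x : V | f x ≠ 0} ∧
      ∀ p : V → ℂ, AnalyticOn ℂ p Set.univ → (∀ u ∈ U, p u = 0) → ∀ v : V, p v = 0 := by
  classical
  set g : V → (V →L[ℂ] ℂ) := fun x : V => (f x)⁻¹ • fderiv ℂ f x with hgdef
  have hfd : Differentiable ℂ f := hf.differentiable (by simp)
  have hf' : ContDiff ℂ ⊤ (fderiv ℂ f) := hf.fderiv_right le_top
  -- smoothness of g on {f ≠ 0}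
  have hgc : ∀ x : V, f x ≠ 0 → ContDiffAt ℂ ⊤ g x := fun x hx =>
    (hf.contDiffAt.inv hx).smul hf'.contDiffAt
  -- homogeneity of the derivative of f
  have hfdh : ∀ (c : ℂ), c ≠ 0 → ∀ x : V, fderiv ℂ f (c • x) = c ^ 2 • fderiv ℂ f x := by
    intro c hc x
    have hL : HasFDerivAt (fun y : V => c • y) (c • ContinuousLinearMap.id ℂ V) x := by
      exact ((c • ContinuousLinearMap.id ℂ V).hasFDerivAt (x := x))
    have h1 : HasFDerivAt (fun y : V => f (c • y))
        ((fderiv ℂ f (c • x)).comp (c • ContinuousLinearMap.id ℂ V)) x :=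
      (hfd (c • x)).hasFDerivAt.comp x hL
    have h2 : HasFDerivAt (fun y : V => f (c • y)) ((c ^ 3) • fderiv ℂ f x) x := by
      have := ((hfd x).hasFDerivAt).const_smul (c ^ 3)
      simpa [hfhom, smul_eq_mul, Pi.smul_def] using this
    have h3 := h1.unique h2
    have h4 : c • fderiv ℂ f (c • x) = (c ^ 3) • fderiv ℂ f x := by
      rw [← h3]; ext v
      simp [mul_comm]
    have h5 : fderiv ℂ f (c • x) = c⁻¹ • ((c ^ 3) • fderiv ℂ f x) := by
      rw [← h4, smul_smul, inv_mul_cancel₀ hc, one_smul]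
    rw [h5, smul_smul]
    congr 1
    field_simp
  -- homogeneity of g (degree -1)
  have hgh : ∀ (c : ℂ), c ≠ 0 → ∀ x : V, g (c • x) = c⁻¹ • g x := by
    intro c hc x
    simp only [hgdef, hfhom, hfdh c hc, smul_smul]
    congr 1
    rcases eq_or_ne (f x) 0 with hx | hx
    · simp [hx]
    · field_simp
  -- Euler identity for g : fderiv g x x = - g x on {f ≠ 0}
  have heuler : ∀ x : V, f x ≠ 0 → fderiv ℂ g x x = -g x := by
    intro x hx
    have hdg : HasFDerivAt g (fderiv ℂ g x) x :=
      ((hgc x hx).differentiableAt (by simp)).hasFDerivAt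
    have hsm : HasDerivAt (fun c : ℂ => c • x) x 1 := by
      simpa using (hasDerivAt_id (1 : ℂ)).smul_const x
    have hdg1 : HasFDerivAt g (fderiv ℂ g x) ((1 : ℂ) • x) := by
      rw [one_smul]; exact hdg
    have h1 : HasDerivAt (fun c : ℂ => g (c • x)) (fderiv ℂ g x x) 1 :=
      hdg1.comp_hasDerivAt 1 hsm
    have h2 : HasDerivAt (fun c : ℂ => c⁻¹ • g x) (-g x) 1 := by
      have := (hasDerivAt_inv (one_ne_zero (α := ℂ))).smul_const (g x)
      simpa using this
    have heq : (fun c : ℂ => c⁻¹ • g x) =ᶠ[nhds (1 : ℂ)] fun c : ℂ => g (c • x) := by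
      filter_upwards [isOpen_ne.mem_nhds (one_ne_zero (α := ℂ))] with c hc
      exact (hgh c hc x).symm
    exact ((h2.congr_of_eventuallyEq heq.symm).unique h1).symm
  -- second derivative of g at I
  set h : V → (V →L[ℂ] V →L[ℂ] ℂ) := fun x => fderiv ℂ g x with hhdef
  have hhc : ContDiffAt ℂ ⊤ h I := (hgc I hI).fderiv_right le_top
  have hH : HasFDerivAt h (fderiv ℂ h I) I :=
    (hhc.differentiableAt (by simp)).hasFDerivAt
  -- differentiate the Euler identity at I
  have hA : HasFDerivAt (fun x : V => h x x)
      ((h I).comp (ContinuousLinearMap.id ℂ V) + (fderiv ℂ h I).flip I) I :=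
    hH.clm_apply (hasFDerivAt_id I)
  have hB : HasFDerivAt (fun x : V => -g x) (-h I) I := by
    have : HasFDerivAt g (h I) I := by
      simpa [hhdef] using ((hgc I hI).differentiableAt (by simp)).hasFDerivAt
    exact this.neg
  have hopen : IsOpen {x : V | f x ≠ 0} := isOpen_ne.preimage hf.continuous
  have hmem : {x : V | f x ≠ 0} ∈ nhds I := hopen.mem_nhds hI
  have hA' : HasFDerivAt (fun x : V => h x x) (-h I) I := by
    refine hB.congr_of_eventuallyEq ?_
    filter_upwards [hmem] with x hx
    exact heuler x hx
  have hkeyCLM : (h I).comp (ContinuousLinearMap.id ℂ V) + (fderiv ℂ h I).flip I = -h I :=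
    hA.unique hA'
  have hkey : ∀ v : V, (fderiv ℂ h I v) I = (-2 : ℂ) • h I v := by
    intro v
    ext w
    have h0 := congrArg (fun L : V →L[ℂ] V →L[ℂ] ℂ => L v w) hkeyCLM
    simp only [ContinuousLinearMap.add_apply, ContinuousLinearMap.coe_comp',
      Function.comp_apply, ContinuousLinearMap.coe_id', id_eq,
      ContinuousLinearMap.flip_apply, ContinuousLinearMap.neg_apply] at h0
    simp only [ContinuousLinearMap.smul_apply, smul_eq_mul]
    linear_combination h0
  -- derivative of Φ at I
  have hΦ1 : HasFDerivAt (fun A : V => h A I)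
      ((h I).comp (0 : V →L[ℂ] V) + (fderiv ℂ h I).flip I) I :=
    hH.clm_apply (hasFDerivAt_const I I)
  have hΦ : HasFDerivAt (fun A : V => S (h A I))
      (S.comp ((h I).comp (0 : V →L[ℂ] V) + (fderiv ℂ h I).flip I)) I :=
    (S.hasFDerivAt).comp I hΦ1
  have hfderivΦ : fderiv ℂ (fun A : V => S (h A I)) I
      = (-2 : ℂ) • ContinuousLinearMap.id ℂ V := by
    rw [hΦ.fderiv]
    ext v
    have e1 : (S.comp ((h I).comp (0 : V →L[ℂ] V) + (fderiv ℂ h I).flip I)) v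
        = S ((fderiv ℂ h I v) I) := by
      simp
    rw [e1, hkey v, map_smul, hhdef]
    simp [hS1 v]
  have part1 : fderiv ℂ (fun A : V => S (fderiv ℂ g A I)) I
      = (-2 : ℂ) • ContinuousLinearMap.id ℂ V := hfderivΦ
  refine ⟨part1, ?_⟩
  -- Φ is smooth at I
  have hΦc : ContDiffAt ℂ ⊤ (fun A : V => S (h A I)) I := by
    have h1 : ContDiffAt ℂ ⊤ (fun A : V => h A I) I := hhc.clm_apply contDiffAt_const
    exact (S.contDiff.contDiffAt).comp I h1
  have hstrict : HasStrictFDerivAt (fun A : V => S (h A I))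
      (fderiv ℂ (fun A : V => S (h A I)) I) I :=
    hΦc.hasStrictFDerivAt (by simp)
  -- the derivative as a continuous linear equivalence
  let e : V ≃L[ℂ] V :=
    (LinearEquiv.smulOfNeZero ℂ V (-2 : ℂ) (by norm_num)).toContinuousLinearEquiv
  have he : (e : V →L[ℂ] V) = (-2 : ℂ) • ContinuousLinearMap.id ℂ V := by
    ext v; simp [e]
  have hstrict' : HasStrictFDerivAt (fun A : V => S (h A I)) (e : V →L[ℂ] V) I := by
    rw [he, ← hfderivΦ]; exact hstrict
  have hmap : Filter.map (fun A : V => S (h A I)) (nhds I) = nhds (S (h I I)) :=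
    hstrict'.map_nhds_eq_of_equiv
  have himg : (fun A : V => S (h A I)) '' {x : V | f x ≠ 0} ∈ nhds (S (h I I)) := by
    rw [← hmap]
    exact Filter.image_mem_map hmem
  obtain ⟨U, hUsub, hUopen, hUmem⟩ := mem_nhds_iff.mp himg
  refine ⟨U, hUopen, hUmem, hUsub, ?_⟩
  intro p hp hpU v
  have hpn : AnalyticOnNhd ℂ p Set.univ := analyticOn_univ.mp hp
  have hconn : IsPreconnected (Set.univ : Set V) :=
    (convex_univ : Convex ℝ (Set.univ : Set V)).isPreconnected
  have hev : p =ᶠ[nhds (S (h I I))] 0 := by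
    filter_upwards [hUopen.mem_nhds hUmem] with u hu
    exact hpU u hu
  have := hpn.eqOn_zero_of_preconnected_of_eventuallyEq_zero hconn (Set.mem_univ _) hev
  exact this (Set.mem_univ v)
end
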